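/- arXiv:2004.12430 — 4 statements merged into one kernel-verified Lean document; each statement's English description precedes it below -/
import Mathlib

section
/- Let φ = {i_1 < i_2 < ... < i_{r+1}} ⊆ {1,...,m}, let V be an r-dimensional subspace of R^m with dim π_φ(V) = r, and let x ∈ R^m. Then π_φ(x) ∈ π_φ(V) if and only if Σ_{k=1}^{r+1} (-1)^{k-1} x_{i_k} [φ \ {i_k}]_V = 0, where [φ \ {i_k}]_V denotes the Plücker coordinate of V indexed by the r-element set φ \ {i_k} (computed with respect to a fixed basis of V). -/
open Matrix Finset

/-- Coordinate projection onto the coordinates indexed by `ψ`. -/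
noncomputable def proj {m : ℕ} (ψ : Finset (Fin m)) :
    ((Fin m) → ℝ) →ₗ[ℝ] ({i // i ∈ ψ} → ℝ) :=
  LinearMap.funLeft ℝ ℝ Subtype.val

/-- `B` is a basis matrix of `V`: its columns are linearly independent and span `V`. -/
def IsBasisMatrixOf {m r : ℕ} (B : Matrix (Fin m) (Fin r) ℝ)
    (V : Submodule ℝ (Fin m → ℝ)) : Prop :=
  LinearIndependent ℝ (fun j : Fin r => fun i : Fin m => B i j) ∧
    Submodule.span ℝ (Set.range (fun j : Fin r => fun i : Fin m => B i j)) = V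

/-- Plücker coordinate: the `k×k` minor of `B` with rows indexed by `ψ`. -/
noncomputable def pluck {m k : ℕ} (B : Matrix (Fin m) (Fin k) ℝ)
    (ψ : Finset (Fin m)) (h : ψ.card = k) : ℝ :=
  (B.submatrix (fun i : Fin k => ((ψ.orderIsoOfFin h i : Fin m))) id).det

/-!
Reindexing the coordinates in `φ` by their increasing enumeration `i₁ < ⋯ < i_{r+1}` turns
`π_φ(V)` into the column span of the `(r+1) × r` matrix `M` formed by the rows of `B` in `φ`;
these `r` columns are independent because `dim π_φ(V) = r`. Hence `π_φ(x)` lies in `π_φ(V)` iff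
the square matrix `[M | π_φ(x)]` is singular, and expanding its determinant along the last column
gives `±∑ (-1)^k x_{i_k} [φ \ {i_k}]_V`, the maximal minors of `M` being the Plücker coordinates.
-/

namespace Matrix

variable {R : Type*} {r : ℕ}

def augment (M : Matrix (Fin (r + 1)) (Fin r) R) (y : Fin (r + 1) → R) :
    Matrix (Fin (r + 1)) (Fin (r + 1)) R :=
  of fun i => Fin.snoc (M i) (y i)

theorem col_augment (M : Matrix (Fin (r + 1)) (Fin r) R) (y : Fin (r + 1) → R) :
    (augment M y).col = Fin.snoc M.col y := by
  ext j i
  refine Fin.lastCases ?_ (fun j => ?_) j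
  · rw [Fin.snoc_last]
    simp [augment, col]
  · rw [Fin.snoc_castSucc]
    simp [augment, col]

theorem mem_span_col_iff_det_augment_eq_zero {K : Type*} [Field K]
    {M : Matrix (Fin (r + 1)) (Fin r) K} (hM : LinearIndependent K M.col) (y : Fin (r + 1) → K) :
    y ∈ Submodule.span K (Set.range M.col) ↔ (augment M y).det = 0 := by
  rw [← not_ne_iff, ← isUnit_iff_ne_zero, ← isUnit_iff_isUnit_det,
    ← linearIndependent_cols_iff_isUnit, col_augment, linearIndependent_finSnoc]
  tauto

theorem det_augment [CommRing R] (M : Matrix (Fin (r + 1)) (Fin r) R) (y : Fin (r + 1) → R) :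
    (augment M y).det =
      (-1) ^ r * ∑ k : Fin (r + 1), (-1) ^ (k : ℕ) * y k * (M.submatrix k.succAbove id).det := by
  rw [det_succ_column _ (Fin.last r), Finset.mul_sum]
  refine Finset.sum_congr rfl fun k _ => ?_
  have hminor : (augment M y).submatrix k.succAbove (Fin.last r).succAbove =
      M.submatrix k.succAbove id := by
    ext i j
    simp [augment]
  rw [hminor, Fin.val_last, pow_add]
  simp only [augment, of_apply, Fin.snoc_last]
  ring

end Matrix

theorem Finset.orderIsoOfFin_erase {α : Type*} [LinearOrder α] {s : Finset α} {n : ℕ}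
    (h : s.card = n + 1) (k : Fin (n + 1)) (h' : (s.erase (s.orderIsoOfFin h k)).card = n)
    (i : Fin n) :
    ((s.erase (s.orderIsoOfFin h k)).orderIsoOfFin h' i : α) =
      s.orderIsoOfFin h (k.succAbove i) := by
  have hmem (i : Fin n) :
      (s.orderIsoOfFin h (k.succAbove i) : α) ∈ s.erase (s.orderIsoOfFin h k) :=
    mem_erase.2 ⟨fun heq => Fin.succAbove_ne k i ((s.orderIsoOfFin h).injective (Subtype.ext heq)),
      coe_mem _⟩
  have hmono : StrictMono fun i => (s.orderIsoOfFin h (k.succAbove i) : α) :=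
    (s.orderIsoOfFin h).strictMono.comp (Fin.strictMono_succAbove k)
  rw [coe_orderIsoOfFin_apply, ← orderEmbOfFin_unique h' hmem hmono]

theorem pluck_erase_orderIsoOfFin {m r : ℕ} (B : Matrix (Fin m) (Fin r) ℝ) {φ : Finset (Fin m)}
    (hφ : φ.card = r + 1) (k : Fin (r + 1)) (h : (φ.erase (φ.orderIsoOfFin hφ k)).card = r) :
    pluck B (φ.erase (φ.orderIsoOfFin hφ k)) h =
      ((B.submatrix (fun i => (φ.orderIsoOfFin hφ i : Fin m)) id).submatrix
        k.succAbove id).det := by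
  unfold pluck
  congr 1
  ext i j
  simp only [submatrix_apply, id_eq, Finset.orderIsoOfFin_erase]

theorem stmt3 {m r : ℕ} (V : Submodule ℝ (Fin m → ℝ))
    (B : Matrix (Fin m) (Fin r) ℝ) (hB : IsBasisMatrixOf B V)
    (φ : Finset (Fin m)) (hφ : φ.card = r + 1)
    (hφV : Module.finrank ℝ (V.map (proj φ)) = r)
    (x : Fin m → ℝ) :
    proj φ x ∈ V.map (proj φ) ↔
      ∑ k : Fin (r + 1), (-1 : ℝ) ^ (k : ℕ) * x ((φ.orderIsoOfFin hφ k : Fin m)) *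
        pluck B (φ.erase ((φ.orderIsoOfFin hφ k : Fin m)))
          (by simp [Finset.card_erase_of_mem (Finset.coe_mem _), hφ]) = 0 := by
  set e : Fin (r + 1) → Fin m := fun k => φ.orderIsoOfFin hφ k
  let reindex : ({i // i ∈ φ} → ℝ) ≃ₗ[ℝ] (Fin (r + 1) → ℝ) :=
    LinearEquiv.funCongrLeft ℝ ℝ (φ.orderIsoOfFin hφ).toEquiv
  have hspan : (V.map (proj φ)).map reindex.toLinearMap =
      Submodule.span ℝ (Set.range (B.submatrix e id).col) := by
    rw [← hB.2, ← Submodule.map_comp, Submodule.map_span, ← Set.range_comp]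
    rfl
  have hmem : proj φ x ∈ V.map (proj φ) ↔
      x ∘ e ∈ Submodule.span ℝ (Set.range (B.submatrix e id).col) := by
    have hx : x ∘ e = reindex (proj φ x) := rfl
    rw [← hspan, hx, Submodule.mem_map_equiv, LinearEquiv.symm_apply_apply]
  have hind : LinearIndependent ℝ (B.submatrix e id).col := by
    rw [linearIndependent_iff_card_eq_finrank_span, Set.finrank, ← hspan,
      LinearEquiv.finrank_map_eq, hφV, Fintype.card_fin]
  rw [hmem, Matrix.mem_span_col_iff_det_augment_eq_zero hind, Matrix.det_augment,
    mul_eq_zero, or_iff_right (pow_ne_zero _ (neg_ne_zero.2 one_ne_zero))]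
  simp only [pluck_erase_orderIsoOfFin, Function.comp_apply, e]
end

section
/- Let Φ = ⋃_{j∈[m−r]} φ_j × {j} ⊆ {1,...,m} × {1,...,m−r} with each φ_j of size r+1, and suppose Φ satisfies the SLMF condition: for every nonempty T ⊆ {1,...,m−r}, #(⋃_{j∈T} φ_j) ≥ #T + r. Let B ∈ R^{m×(m−r)} be a matrix supported on Φ (b_{ij} = 0 whenever (i,j) ∉ Φ) whose nonzero entries are algebraically independent indeterminates (equivalently, generic reals). Then every (m−r)×(m−r) minor of B (choosing any m−r rows) is a nonzero polynomial in those entries. -/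
open Matrix Finset MvPolynomial

theorem stmt7 {m r : ℕ} (hr : r ≤ m)
    (φ : Fin (m - r) → Finset (Fin m)) (hφ : ∀ j, (φ j).card = r + 1)
    (hSLMF : ∀ T : Finset (Fin (m - r)), T.Nonempty →
      T.card + r ≤ (T.biUnion φ).card)
    (B : Matrix (Fin m) (Fin (m - r)) (MvPolynomial (Fin m × Fin (m - r)) ℝ))
    (hB : ∀ i j, B i j = if i ∈ φ j then MvPolynomial.X (i, j) else 0) :
    ∀ (σ : Finset (Fin m)) (hσ : σ.card = m - r),
      (B.submatrix (fun a : Fin (m - r) => ((σ.orderIsoOfFin hσ a : Fin m))) id).det ≠ 0 := by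
  intro σ hσ
  have hall : ∀ s : Finset (Fin (m - r)), s.card ≤ (s.biUnion (fun j => σ ∩ φ j)).card := by
    intro s
    rcases s.eq_empty_or_nonempty with rfl | hs
    · simp
    have hU : s.biUnion (fun j => σ ∩ φ j) = σ ∩ s.biUnion φ := by
      ext x; simp [mem_biUnion, mem_inter]; tauto
    rw [hU]
    have h1 := hSLMF s hs
    have hsub : (s.biUnion φ) \ σ ⊆ σᶜ := by
      intro x hx
      simp only [mem_sdiff] at hx
      simpa [Finset.mem_compl] using hx.2
    have h2 : ((s.biUnion φ) \ σ).card ≤ σᶜ.card := card_le_card hsub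
    have h3 : (σ ∩ s.biUnion φ).card + ((s.biUnion φ) \ σ).card = (s.biUnion φ).card := by
      rw [inter_comm]; exact card_inter_add_card_sdiff _ _
    have h4 : σᶜ.card = r := by
      have := Finset.card_compl σ
      simp only [Fintype.card_fin, hσ] at this
      omega
    omega
  obtain ⟨f, hfinj, hf⟩ :=
    (Finset.all_card_le_biUnion_card_iff_exists_injective (fun j => σ ∩ φ j)).mp hall
  have hfσ : ∀ j, f j ∈ σ := fun j => (mem_inter.mp (hf j)).1
  have hfφ : ∀ j, f j ∈ φ j := fun j => (mem_inter.mp (hf j)).2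
  set rowmap : Fin (m - r) → Fin m := fun a => ((σ.orderIsoOfFin hσ a : Fin m)) with hrowmap
  have hrowinj : Function.Injective rowmap := fun a b h => by
    have := (σ.orderIsoOfFin hσ).injective (Subtype.ext h)
    exact this
  set τfun : Fin (m - r) → Fin (m - r) :=
    fun j => (σ.orderIsoOfFin hσ).symm ⟨f j, hfσ j⟩ with hτfun
  have hrowτ : ∀ j, rowmap (τfun j) = f j := by
    intro j
    exact congrArg Subtype.val ((σ.orderIsoOfFin hσ).apply_symm_apply ⟨f j, hfσ j⟩)
  have hτinj : Function.Injective τfun := by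
    intro a b h
    apply hfinj
    rw [← hrowτ a, ← hrowτ b, h]
  have hτbij : Function.Bijective τfun := Finite.injective_iff_bijective.mp hτinj
  set τ : Equiv.Perm (Fin (m - r)) := Equiv.ofBijective τfun hτbij with hτ
  intro hdet
  set e : MvPolynomial (Fin m × Fin (m - r)) ℝ →+* ℝ :=
    MvPolynomial.eval (fun p : Fin m × Fin (m - r) => if p.1 = f p.2 then (1 : ℝ) else 0)
    with he
  have hrowτ' : ∀ j, rowmap (τ j) = f j := hrowτ
  have hmap : (B.submatrix rowmap id).map e =
      ((1 : Matrix (Fin (m - r)) (Fin (m - r)) ℝ).submatrix id τ) := by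
    ext a j
    simp only [Matrix.map_apply, Matrix.submatrix_apply, id_eq, hB]
    by_cases h : a = τ j
    · subst h
      simp [hrowτ' j, hfφ j, Matrix.one_apply, he]
    · have h1 : rowmap a ≠ f j := fun hq => h (hrowinj (hq.trans (hrowτ' j).symm))
      by_cases hmem : rowmap a ∈ φ j <;>
        simp [hmem, h1, h, Matrix.one_apply, he]
  have hchain := RingHom.map_det e (B.submatrix rowmap id)
  rw [hdet, map_zero, RingHom.mapMatrix_apply, hmap, Matrix.det_permute' τ,
    Matrix.det_one, mul_one] at hchain
  rcases Int.units_eq_one_or (Equiv.Perm.sign τ) with h | h <;> rw [h] at hchain <;>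
    norm_num at hchain
end

section
/- Let Φ = ⋃_{j∈[m−r]} φ_j × {j} ⊆ {1,...,m} × {1,...,m−r} with each φ_j of size r+1. If there exists a matrix B ∈ R^{m×(m−r)} supported on Φ such that every (m−r)×(m−r) minor of B is nonzero, then Φ is an (r,m)-SLMF, i.e., for every nonempty T ⊆ {1,...,m−r} one has #(⋃_{j∈T} φ_j) ≥ #T + r. -/
open Matrix Finset

theorem stmt8 {m r : ℕ} (hr : r ≤ m)
    (φ : Fin (m - r) → Finset (Fin m)) (hφ : ∀ j, (φ j).card = r + 1)
    (B : Matrix (Fin m) (Fin (m - r)) ℝ)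
    (hsupp : ∀ i j, i ∉ φ j → B i j = 0)
    (hminors : ∀ (σ : Finset (Fin m)) (hσ : σ.card = m - r),
      (B.submatrix (fun a : Fin (m - r) => ((σ.orderIsoOfFin hσ a : Fin m))) id).det ≠ 0) :
    ∀ T : Finset (Fin (m - r)), T.Nonempty → T.card + r ≤ (T.biUnion φ).card := by
  intro T hT
  by_contra hlt
  push_neg at hlt
  set U : Finset (Fin m) := T.biUnion φ with hUdef
  -- U has at least r+1 elements
  obtain ⟨j0, hj0⟩ := hT
  have hφU : φ j0 ⊆ U := subset_biUnion_of_mem φ hj0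
  have hUr : r + 1 ≤ U.card := by
    calc r + 1 = (φ j0).card := (hφ j0).symm
    _ ≤ U.card := card_le_card hφU
  have hUm : U.card ≤ m := by
    simpa using card_le_card (subset_univ U)
  -- choose σ ⊇ Uᶜ with card m - r
  have hUc : Uᶜ.card = m - U.card := by
    rw [card_compl, Fintype.card_fin]
  have h1 : Uᶜ.card ≤ m - r := by
    rw [hUc]; omega
  have h2 : m - r ≤ (univ : Finset (Fin m)).card := by
    rw [card_univ, Fintype.card_fin]; omega
  obtain ⟨σ, hσsub, _, hσ⟩ := exists_subsuperset_card_eq (subset_univ Uᶜ) h1 h2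
  have hdet := hminors σ hσ
  set e := σ.orderIsoOfFin hσ with he
  set M : Matrix (Fin (m - r)) (Fin (m - r)) ℝ :=
    B.submatrix (fun a => ((e a : Fin m))) id with hM
  -- the set of row indices mapping into U
  set s' : Finset (Fin (m - r)) := univ.filter (fun a => (e a : Fin m) ∈ U) with hs'
  have hcard_s' : s'.card = U.card - r := by
    have himg : s'.image (fun a => ((e a : Fin m))) = σ ∩ U := by
      ext x
      simp only [mem_image, hs', mem_filter, mem_univ, true_and, mem_inter]
      constructor
      · rintro ⟨a, ha, rfl⟩
        exact ⟨(e a).2, ha⟩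
      · rintro ⟨hxσ, hxU⟩
        exact ⟨e.symm ⟨x, hxσ⟩, by simp [hxU], by simp⟩
    have hinj : Set.InjOn (fun a => ((e a : Fin m))) s' := by
      intro a _ b _ hab
      exact e.injective (Subtype.ext hab)
    have h3 : s'.card = (σ ∩ U).card := by
      rw [← himg, card_image_of_injOn hinj]
    have h4 : σ ∩ U = σ \ Uᶜ := by
      ext x; simp
    have h5 : (σ \ Uᶜ).card = σ.card - Uᶜ.card := card_sdiff_of_subset hσsub
    rw [h3, h4, h5, hσ, hUc]
    omega
  have hcard_lt : s'.card < T.card := by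
    rw [hcard_s']
    omega
  -- columns of M indexed by T, restricted to rows in s'
  set w : T → (s' → ℝ) := fun j a => M a j with hw
  have hnotli : ¬ LinearIndependent ℝ w := by
    intro hli
    have := hli.fintype_card_le_finrank
    rw [Module.finrank_pi ℝ] at this
    simp only [Fintype.card_coe] at this
    omega
  obtain ⟨g, hgsum, i0, hi0⟩ := Fintype.not_linearIndependent_iff.mp hnotli
  classical
  set c : Fin (m - r) → ℝ := fun j => if h : j ∈ T then g ⟨j, h⟩ else 0 with hc
  have hcne : c ≠ 0 := by
    intro hzero
    apply hi0
    have := congrFun hzero (i0 : Fin (m - r))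
    simpa [hc, i0.2] using this
  have hmv : M *ᵥ c = 0 := by
    funext a
    simp only [mulVec, dotProduct, Pi.zero_apply]
    by_cases ha : a ∈ s'
    · have := congrFun hgsum ⟨a, ha⟩
      simp only [Finset.sum_apply, Pi.smul_apply, smul_eq_mul, Pi.zero_apply, hw] at this
      calc ∑ x : Fin (m - r), M a x * c x
          = ∑ x ∈ T, M a x * c x := by
            refine (Finset.sum_subset T.subset_univ ?_).symm
            intro j _ hj; simp [hc, hj]
        _ = ∑ x ∈ T.attach, g x * M a (x : Fin (m - r)) := by
            rw [← Finset.sum_attach T (fun x => M a x * c x)]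
            refine Finset.sum_congr rfl ?_
            intro x _
            simp [hc, x.2, mul_comm]
        _ = 0 := by simpa using this
    · have haU : (e a : Fin m) ∉ U := by
        simp only [hs', mem_filter, mem_univ, true_and] at ha
        exact ha
      apply Finset.sum_eq_zero
      intro j _
      by_cases hj : j ∈ T
      · have : (e a : Fin m) ∉ φ j := fun hmem => haU (mem_biUnion.mpr ⟨j, hj, hmem⟩)
        have hBz : M a j = 0 := hsupp _ _ this
        rw [hBz, zero_mul]
      · simp [hc, hj]
  exact hdet ((Matrix.exists_mulVec_eq_zero_iff).mp ⟨c, hcne, hmv⟩)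
end

section
/- Let Φ = ⋃_{j∈[m−r]} φ_j × {j} ⊆ [m]×[m−r] be an (r,m)-SLMF, let V be an r-dimensional subspace of R^m, and suppose B ∈ R^{m×(m−r)} is a matrix supported on Φ whose columns all lie in V^⊥ and which has rank m−r. If x ∈ R^m satisfies: for every j ∈ [m−r], π_{φ_j}(x) ∈ π_{φ_j}(V), and additionally for every j the j-th column of B restricted to φ_j is a normal vector of the hyperplane π_{φ_j}(V) ⊆ R^{φ_j}, then x ∈ V. -/
open Matrix Finset

/-- Standard dot product on `ℝ^m`. -/
def dot {m : ℕ} (x y : Fin m → ℝ) : ℝ := ∑ i, x i * y i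

/-!
The columns of `B` lie in `V^⊥` and have rank `m - r = m - dim V`, so they span `V^⊥`, i.e.
`V` is exactly the kernel of `x ↦ Bᵀ x`. Each column is supported on `φ j`, so its pairing with
`x` only sees `π_{φ j}(x)`; choosing `v ∈ V` with `π_{φ j}(v) = π_{φ j}(x)` gives
`⟨b_j, x⟩ = ⟨b_j, v⟩ = 0`.
-/

open Module

theorem Matrix.ker_mulVecLin_transpose_eq {K m n : Type*} [Field K] [Fintype m] [Fintype n]
    (A : Matrix m n K) (V : Submodule K (m → K)) (hAV : ∀ v ∈ V, Aᵀ *ᵥ v = 0)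
    (hdim : Fintype.card m ≤ A.rank + finrank K V) :
    LinearMap.ker Aᵀ.mulVecLin = V := by
  refine (Submodule.eq_of_le_of_finrank_le (fun v hv => hAV v hv) ?_).symm
  have hnullity := LinearMap.finrank_range_add_finrank_ker Aᵀ.mulVecLin
  rw [← Matrix.rank, rank_transpose, finrank_fintype_fun_eq_card] at hnullity
  omega

theorem dotProduct_eq_of_proj_eq {m : ℕ} {s : Finset (Fin m)} {b x y : Fin m → ℝ}
    (hb : ∀ i ∉ s, b i = 0) (hxy : proj s x = proj s y) : b ⬝ᵥ x = b ⬝ᵥ y := by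
  refine Finset.sum_congr rfl fun i _ => ?_
  by_cases hi : i ∈ s
  · rw [show x i = y i from congrFun hxy ⟨i, hi⟩]
  · rw [hb i hi, zero_mul, zero_mul]

theorem stmt10_general {m r : ℕ}
    (φ : Fin (m - r) → Finset (Fin m))
    (V : Submodule ℝ (Fin m → ℝ)) (hV : Module.finrank ℝ V = r)
    (B : Matrix (Fin m) (Fin (m - r)) ℝ)
    (hsupp : ∀ i j, i ∉ φ j → B i j = 0)
    (hperp : ∀ j : Fin (m - r), ∀ v ∈ V, dot (fun i => B i j) v = 0)
    (hrank : B.rank = m - r)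
    (x : Fin m → ℝ)
    (hx : ∀ j : Fin (m - r), proj (φ j) x ∈ V.map (proj (φ j))) :
    x ∈ V := by
  have hBV : ∀ v ∈ V, Bᵀ *ᵥ v = 0 := fun v hv => funext fun j => hperp j v hv
  have hker : LinearMap.ker Bᵀ.mulVecLin = V :=
    B.ker_mulVecLin_transpose_eq V hBV (by rw [hrank, hV, Fintype.card_fin]; omega)
  rw [← hker, LinearMap.mem_ker, mulVecLin_apply]
  funext j
  obtain ⟨v, hv, hvx⟩ := hx j
  calc (Bᵀ *ᵥ x) j = (Bᵀ *ᵥ v) j := dotProduct_eq_of_proj_eq (hsupp · j) hvx.symm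
    _ = 0 := congrFun (hBV v hv) j

theorem stmt10 {m r : ℕ} (hr : r ≤ m)
    (φ : Fin (m - r) → Finset (Fin m)) (hφ : ∀ j, (φ j).card = r + 1)
    (hSLMF : ∀ T : Finset (Fin (m - r)), T.Nonempty → T.card + r ≤ (T.biUnion φ).card)
    (V : Submodule ℝ (Fin m → ℝ)) (hV : Module.finrank ℝ V = r)
    (B : Matrix (Fin m) (Fin (m - r)) ℝ)
    (hsupp : ∀ i j, i ∉ φ j → B i j = 0)
    (hperp : ∀ j : Fin (m - r), ∀ v ∈ V, dot (fun i => B i j) v = 0)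
    (hrank : B.rank = m - r)
    (x : Fin m → ℝ)
    (hx : ∀ j : Fin (m - r), proj (φ j) x ∈ V.map (proj (φ j)))
    -- for every j, the j-th column of B restricted to φ j is a (nonzero) normal
    -- vector of the hyperplane π_{φ j}(V) ⊆ ℝ^{φ j} :
    (hhyp : ∀ j : Fin (m - r), Module.finrank ℝ (V.map (proj (φ j))) = r)
    (hnormal : ∀ j : Fin (m - r),
      (fun i : {i // i ∈ φ j} => B (i : Fin m) j) ≠ 0 ∧
      ∀ v ∈ V, ∑ i ∈ φ j, B i j * v i = 0) :
    x ∈ V :=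
  stmt10_general φ V hV B hsupp hperp hrank x hx
end
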